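/- arXiv:math/9204232 — 4 statements merged into one kernel-verified Lean document; each statement's English description precedes it below -/
import Mathlib

section
/- Let 𝒳 and 𝒳′ be finite irredundant families of irreducible reduced analytic germs in (ℂⁿ,0) (irredundant meaning that deleting any member of the family strictly enlarges the associated tangent algebra D_𝒳). If D_𝒳 = D_{𝒳′}, then 𝒳 = 𝒳′ as sets of germs. In particular, the germ X associated to a maximal visible subalgebra as in Theorem 1(b),(c) is uniquely determined by the subalgebra. -/
open Filter Topology

set_option synthInstance.maxHeartbeats 1000000
set_option maxHeartbeats 1000000

noncomputable section

/-- The `ℂ`-algebra structure on germs of `ℂ`-valued functions. -/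
instance germAlgebra {α : Type*} (l : Filter α) : Algebra ℂ (Filter.Germ l ℂ) :=
  Algebra.ofModule
    (fun r x y => by
      induction x using Filter.Germ.inductionOn
      induction y using Filter.Germ.inductionOn
      rw [← Filter.Germ.coe_smul, ← Filter.Germ.coe_mul, ← Filter.Germ.coe_mul,
        ← Filter.Germ.coe_smul, smul_mul_assoc])
    (fun r x y => by
      induction x using Filter.Germ.inductionOn
      induction y using Filter.Germ.inductionOn
      rw [← Filter.Germ.coe_smul, ← Filter.Germ.coe_mul, ← Filter.Germ.coe_mul,
        ← Filter.Germ.coe_smul, mul_smul_comm])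

/-- The algebra `O_n` of germs at `0 ∈ ℂⁿ` of holomorphic functions, realized as the
subalgebra of all germs (at the filter `𝓝 0`) of functions `ℂⁿ → ℂ` that are analytic at `0`. -/
def On (n : ℕ) : Subalgebra ℂ (Filter.Germ (𝓝 (0 : Fin n → ℂ)) ℂ) where
  carrier := {g | ∃ f : (Fin n → ℂ) → ℂ, AnalyticAt ℂ f 0 ∧ g = Filter.Germ.ofFun f}
  mul_mem' := by
    rintro a b ⟨f, hf, rfl⟩ ⟨g, hg, rfl⟩
    exact ⟨f * g, hf.mul hg, rfl⟩
  add_mem' := by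
    rintro a b ⟨f, hf, rfl⟩ ⟨g, hg, rfl⟩
    exact ⟨f + g, hf.add hg, rfl⟩
  algebraMap_mem' := fun c => ⟨fun _ => c, analyticAt_const, by
    rw [Algebra.algebraMap_eq_smul_one, ← Filter.Germ.coe_one, ← Filter.Germ.coe_smul]
    congr 1; funext _; simp⟩


/-- Membership in `O_n` means being the germ of a function analytic at `0`. -/
theorem mem_On {n : ℕ} {g : Filter.Germ (𝓝 (0 : Fin n → ℂ)) ℂ} :
    g ∈ On n ↔ ∃ f : (Fin n → ℂ) → ℂ, AnalyticAt ℂ f 0 ∧ g = Filter.Germ.ofFun f :=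
  Iff.rfl

attribute [irreducible] On

/-- The Lie algebra `D = Der_ℂ(O_n)` of germs of holomorphic vector fields at `0 ∈ ℂⁿ`. -/
abbrev Dn (n : ℕ) := Derivation ℂ (On n) (On n)

/-- The tangent algebra `D_X` of the germ `X` with vanishing ideal `J`:
all vector fields `D` with `D(J) ⊆ J`. -/
def tangentAlgebra (n : ℕ) (J : Ideal (On n)) : LieSubalgebra ℂ (Dn n) where
  carrier := {D | ∀ f ∈ J, D f ∈ J}
  add_mem' := fun {D E} hD hE f hf => by
    rw [Derivation.add_apply]; exact J.add_mem (hD f hf) (hE f hf)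
  zero_mem' := fun f hf => by rw [Derivation.zero_apply]; exact J.zero_mem
  smul_mem' := fun c D hD f hf => by
    rw [Derivation.smul_apply]; exact J.smul_of_tower_mem c (hD f hf)
  lie_mem' := fun {D E} hD hE f hf => by
    rw [Derivation.commutator_apply]
    exact J.sub_mem (hD _ (hE f hf)) (hE _ (hD f hf))

section LieDefs

variable {L : Type*} [LieRing L] [LieAlgebra ℂ L]

/-- A Lie subalgebra `A` of `B` is *balanced in `B`* if `A ⊆ B`, `A` contains no nonzero
Lie ideal of `B`, but `A` contains some `a ≠ 0` with `[a,B] ⊆ A` and `[[a,B],B] ⊆ A`. -/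
def IsBalancedIn (A B : LieSubalgebra ℂ L) : Prop :=
  A ≤ B ∧
  (∀ I : LieIdeal ℂ B, (∀ x : B, x ∈ I → (x : L) ∈ A) → I = ⊥) ∧
  (∃ a : L, a ∈ A ∧ a ≠ 0 ∧ (∀ b ∈ B, ⁅a, b⁆ ∈ A) ∧
    ∀ b ∈ B, ∀ c ∈ B, ⁅⁅a, b⁆, c⁆ ∈ A)

/-- `A` is maximal balanced (= maximal visible) in `B`: maximal among balanced subalgebras. -/
def IsMaximalBalancedIn (A B : LieSubalgebra ℂ L) : Prop :=
  IsBalancedIn A B ∧ ∀ A' : LieSubalgebra ℂ L, IsBalancedIn A' B → A ≤ A' → A' = A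

/-- `A` is visible in `B`: there is a chain `A = A_m ⊆ ⋯ ⊆ A_0 = B` (`m ≥ 1`) with each
`A_k` maximal balanced in `A_{k-1}`. -/
def IsVisibleIn (A B : LieSubalgebra ℂ L) : Prop :=
  ∃ m : ℕ, 0 < m ∧ ∃ c : ℕ → LieSubalgebra ℂ L, c 0 = B ∧ c m = A ∧
    ∀ k < m, IsMaximalBalancedIn (c (k + 1)) (c k)

end LieDefs


/-! ### Evaluation at the origin and the maximal ideal -/

/-- The value at `0` of a germ at `0`. -/
def germValue {n : ℕ} (g : Filter.Germ (𝓝 (0 : Fin n → ℂ)) ℂ) : ℂ :=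
  g.liftOn (fun f => f 0) (fun _ _ h => h.eq_of_nhds)

theorem germValue_add {n : ℕ} (a b : Filter.Germ (𝓝 (0 : Fin n → ℂ)) ℂ) :
    germValue (a + b) = germValue a + germValue b := by
  induction a using Filter.Germ.inductionOn
  induction b using Filter.Germ.inductionOn
  rfl

theorem germValue_mul {n : ℕ} (a b : Filter.Germ (𝓝 (0 : Fin n → ℂ)) ℂ) :
    germValue (a * b) = germValue a * germValue b := by
  induction a using Filter.Germ.inductionOn
  induction b using Filter.Germ.inductionOn
  rfl

/-- The maximal ideal `m ⊆ O_n` of germs vanishing at the origin. -/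
def mIdeal (n : ℕ) : Ideal (On n) where
  carrier := {g | germValue g.1 = 0}
  add_mem' := fun {a b} ha hb => by
    show germValue (a.1 + b.1) = 0
    rw [germValue_add, ha, hb, add_zero]
  zero_mem' := rfl
  smul_mem' := fun c g hg => by
    show germValue (c.1 * g.1) = 0
    rw [germValue_mul, hg, mul_zero]

/-! ### Regular local rings -/

/-- A commutative ring is a regular local ring if it is Noetherian local and its maximal
ideal can be generated by `dim R` elements. -/
def IsRegularLocal (R : Type*) [CommRing R] : Prop :=
  IsNoetherianRing R ∧ IsLocalRing R ∧
    ∃ s : Finset R, (Ideal.span (s : Set R)).IsMaximal ∧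
      ((s.card : ℕ∞) : WithBot ℕ∞) = ringKrullDim R

/-! ### The singular locus -/

/-- `X = V(I)` is singular at the point corresponding to the prime `P ⊇ I` if the local
ring of `X` at that point, `(O_n/I)_P ≅ (O_n)_P / I·(O_n)_P`, is not regular. -/
def NotRegularAtPrime (n : ℕ) (I P : Ideal (On n)) [P.IsPrime] : Prop :=
  ∀ (Rp : Type) [CommRing Rp] [Algebra (On n) Rp] [IsLocalization.AtPrime Rp P],
    ¬ IsRegularLocal (Rp ⧸ I.map (algebraMap (On n) Rp))

/-- The vanishing ideal of `Sing X` (with its reduced structure), for `X = V(I)`: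
the intersection of all primes of `O_n` containing `I` at which `X` is singular. -/
def singIdeal (n : ℕ) (I : Ideal (On n)) : Ideal (On n) :=
  sInf {P | ∃ h : P.IsPrime, I ≤ P ∧ @NotRegularAtPrime n I P h}

/-! ### The integral variety -/

/-- The ideal `I(A) = {g ∈ O_n : g·D ⊆ A}` associated to a Lie subalgebra `A ⊆ D`;
the integral variety `X(A)` is the germ with vanishing ideal `√I(A)`. -/
def intIdeal {n : ℕ} (A : LieSubalgebra ℂ (Dn n)) : Ideal (On n) where
  carrier := {g | ∀ D : Dn n, g • D ∈ A}
  add_mem' := fun {a b} ha hb D => by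
    rw [add_smul]; exact A.add_mem (ha D) (hb D)
  zero_mem' := fun D => by rw [zero_smul]; exact A.zero_mem
  smul_mem' := fun c g hg D => by
    rw [smul_eq_mul, mul_comm, mul_smul]; exact hg (c • D)

/-! ### The coefficientwise topology -/

/-- The `k`-th Taylor coefficient at `0` of a holomorphic germ (as a continuous
multilinear map), given by the `k`-th iterated derivative at `0`. -/
def taylorCoeff {n : ℕ} (g : On n) (k : ℕ) :
    ContinuousMultilinearMap ℂ (fun _ : Fin k => (Fin n → ℂ)) ℂ :=
  iteratedFDeriv ℂ k (Classical.choose (mem_On.mp g.2)) 0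

/-- The coefficientwise topology on `O_n`: the topology of convergence of all Taylor
coefficients at `0`. -/
instance OnTopology (n : ℕ) : TopologicalSpace (On n) :=
  TopologicalSpace.induced (fun g k => taylorCoeff g k) inferInstance

/-- The `i`-th coordinate function as a holomorphic germ. -/
def coordGerm (n : ℕ) (i : Fin n) : On n :=
  ⟨Filter.Germ.ofFun (fun z => z i), mem_On.mpr
    ⟨fun z => z i, (ContinuousLinearMap.proj (R := ℂ) (φ := fun _ : Fin n => ℂ) i).analyticAt 0, rfl⟩⟩

/-- The topology on `D ≅ O_nⁿ` induced from the coefficientwise topology on `O_n`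
via `D ↦ (D x₁, …, D xₙ)`. -/
instance DnTopology (n : ℕ) : TopologicalSpace (Dn n) :=
  TopologicalSpace.induced (fun D : Dn n => fun i : Fin n => D (coordGerm n i)) inferInstance

/-! ### Conjugation of vector fields by automorphisms -/

/-- The action `Φ = φ*` of an automorphism of `O_n` on vector fields:
`Φ(D) = φ* ∘ D ∘ (φ*)⁻¹`. -/
def conjDer {n : ℕ} (ψ : On n ≃ₐ[ℂ] On n) (D : Dn n) : Dn n where
  toLinearMap := ψ.toLinearMap ∘ₗ D.toLinearMap ∘ₗ ψ.symm.toLinearMap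
  map_one_eq_zero' := by simp
  leibniz' := fun a b => by
    simp only [LinearMap.coe_comp, Function.comp_apply, AlgEquiv.toLinearMap_apply,
      Derivation.coeFn_coe, map_mul, Derivation.leibniz, map_add, smul_eq_mul,
      AlgEquiv.apply_symm_apply]


/-- The Lie algebra `D_0` of vector fields vanishing at `0`: all `D` with `D(O_n) ⊆ m`. -/
def D0 (n : ℕ) : LieSubalgebra ℂ (Dn n) where
  carrier := {D | ∀ f : On n, D f ∈ mIdeal n}
  add_mem' := fun {D E} hD hE f => by
    rw [Derivation.add_apply]; exact (mIdeal n).add_mem (hD f) (hE f)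
  zero_mem' := fun f => by rw [Derivation.zero_apply]; exact (mIdeal n).zero_mem
  smul_mem' := fun c D hD f => by
    rw [Derivation.smul_apply]; exact (mIdeal n).smul_of_tower_mem c (hD f)
  lie_mem' := fun {D E} hD hE f => by
    rw [Derivation.commutator_apply]; exact (mIdeal n).sub_mem (hD _) (hE _)

/-! For a prime `J`, `g • D` is tangent to `V(J)` iff `g ∈ J` or `D` is. Hence, for a family `S`
of primes and any vector field `D`, the ideal `{g | g • D ∈ D_S}` is the intersection of those
members of `S` to which `D` is not tangent. Irredundancy provides, for each `J ∈ S`, a `D` tangent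
to every member but `J`; for it that ideal is `J` itself. Computing the same ideal through
`D_S = D_S'` exhibits the prime `J` as a finite intersection of members of `S'`, so `J ∈ S'`. -/

theorem LieSubalgebra.mem_iInf {R L : Type*} [CommRing R] [LieRing L] [LieAlgebra R L] {ι : Sort*}
    (p : ι → LieSubalgebra R L) {x : L} : x ∈ ⨅ i, p i ↔ ∀ i, x ∈ p i := by
  rw [iInf, ← SetLike.mem_coe, LieSubalgebra.coe_sInf]
  simp

section TangentAlgebra

variable {n : ℕ}

def IsIrredundantFamily (S : Finset (Ideal (On n))) : Prop :=
  ∀ T ⊂ S, (⨅ J ∈ T, tangentAlgebra n J) ≠ ⨅ J ∈ S, tangentAlgebra n J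

theorem smul_mem_tangentAlgebra_iff {J : Ideal (On n)} (hJ : J.IsPrime) (g : On n) (D : Dn n) :
    g • D ∈ tangentAlgebra n J ↔ g ∈ J ∨ D ∈ tangentAlgebra n J := by
  refine ⟨fun hgD => or_iff_not_imp_right.2 fun hD => ?_, ?_⟩
  · obtain ⟨f, hf, hDf⟩ : ∃ f ∈ J, D f ∉ J := by simpa [tangentAlgebra] using hD
    exact (hJ.mem_or_mem (hgD f hf)).resolve_right hDf
  · rintro (hg | hD) f hf
    · exact J.mul_mem_right _ hg
    · exact J.mul_mem_left _ (hD f hf)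

theorem smul_mem_biInf_tangentAlgebra_iff {S : Finset (Ideal (On n))} (hS : ∀ J ∈ S, J.IsPrime)
    (g : On n) (D : Dn n) :
    g • D ∈ ⨅ J ∈ S, tangentAlgebra n J ↔ ∀ J ∈ S, D ∉ tangentAlgebra n J → g ∈ J := by
  simp only [LieSubalgebra.mem_iInf]
  refine forall₂_congr fun J hJ => ?_
  rw [smul_mem_tangentAlgebra_iff (hS J hJ), or_iff_not_imp_right]

theorem exists_notMem_tangentAlgebra_of_isIrredundantFamily {S : Finset (Ideal (On n))}
    (hirr : IsIrredundantFamily S) {J : Ideal (On n)} (hJ : J ∈ S) :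
    ∃ D : Dn n, D ∉ tangentAlgebra n J ∧ ∀ K ∈ S, K ≠ J → D ∈ tangentAlgebra n K := by
  classical
  have hle : (⨅ K ∈ S, tangentAlgebra n K) ≤ ⨅ K ∈ S.erase J, tangentAlgebra n K :=
    biInf_mono fun K => Finset.mem_of_mem_erase
  obtain ⟨D, hDerase, hDS⟩ :=
    SetLike.exists_of_lt (lt_of_le_of_ne' hle (hirr _ (Finset.erase_ssubset hJ)))
  simp only [LieSubalgebra.mem_iInf, Finset.mem_erase] at hDerase hDS
  refine ⟨D, fun hDJ => hDS fun K hK => ?_, fun K hK hKJ => hDerase K ⟨hKJ, hK⟩⟩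
  obtain rfl | hKJ := eq_or_ne K J
  exacts [hDJ, hDerase K ⟨hKJ, hK⟩]

theorem mem_of_biInf_tangentAlgebra_eq {S S' : Finset (Ideal (On n))}
    (hS : ∀ J ∈ S, J.IsPrime) (hS' : ∀ J ∈ S', J.IsPrime)
    (hirr : IsIrredundantFamily S)
    (h : (⨅ J ∈ S, tangentAlgebra n J) = ⨅ J ∈ S', tangentAlgebra n J)
    {J : Ideal (On n)} (hJ : J ∈ S) : J ∈ S' := by
  classical
  obtain ⟨D, hDJ, hDK⟩ := exists_notMem_tangentAlgebra_of_isIrredundantFamily hirr hJ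
  have hJ_eq : J = (S'.filter fun K => D ∉ tangentAlgebra n K).inf id := by
    ext g
    have hJ_iff : g ∈ J ↔ g • D ∈ ⨅ K ∈ S, tangentAlgebra n K := by
      rw [smul_mem_biInf_tangentAlgebra_iff hS]
      refine ⟨fun hg K hK hDK' => ?_, fun hg => hg J hJ hDJ⟩
      obtain rfl | hKJ := eq_or_ne K J
      exacts [hg, absurd (hDK K hK hKJ) hDK']
    rw [hJ_iff, h, smul_mem_biInf_tangentAlgebra_iff hS', Submodule.mem_finsetInf]
    simp only [Finset.mem_filter, and_imp, id]
  obtain ⟨K, hK, hKJ⟩ := Ideal.eq_inf_of_isPrime_inf (hJ_eq ▸ hS J hJ)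
  rw [hJ_eq, ← hKJ]
  exact (Finset.mem_filter.1 hK).1

theorem eq_of_biInf_tangentAlgebra_eq {S S' : Finset (Ideal (On n))}
    (hS : ∀ J ∈ S, J.IsPrime) (hS' : ∀ J ∈ S', J.IsPrime)
    (hirr : IsIrredundantFamily S) (hirr' : IsIrredundantFamily S')
    (h : (⨅ J ∈ S, tangentAlgebra n J) = ⨅ J ∈ S', tangentAlgebra n J) : S = S' :=
  Finset.Subset.antisymm (fun _ => mem_of_biInf_tangentAlgebra_eq hS hS' hirr h)
    (fun _ => mem_of_biInf_tangentAlgebra_eq hS' hS hirr' h.symm)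

theorem isIrredundantFamily_singleton {J : Ideal (On n)} (hJ : tangentAlgebra n J ≠ ⊤) :
    IsIrredundantFamily {J} := by
  intro T hT
  rw [Finset.ssubset_singleton_iff.1 hT, Finset.iInf_singleton]
  simpa using hJ.symm

end TangentAlgebra

/-- Irredundant finite families of irreducible reduced analytic germs are uniquely determined
by their tangent algebra: if `D_𝒳 = D_𝒳′` for irredundant families `𝒳, 𝒳′` of irreducible
germs (i.e. of prime ideals), then `𝒳 = 𝒳′` as sets of germs.  In particular two irreducible
germs (with tangent algebra `≠ D`, i.e. forming irredundant singleton families) having the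
same tangent algebra coincide. -/
theorem irredundant_family_determined_by_tangentAlgebra (n : ℕ)
    (S S' : Finset (Ideal (On n)))
    (hS : ∀ J ∈ S, J.IsPrime) (hS' : ∀ J ∈ S', J.IsPrime)
    (hirr : ∀ T ⊂ S, (⨅ J ∈ T, tangentAlgebra n J) ≠ ⨅ J ∈ S, tangentAlgebra n J)
    (hirr' : ∀ T ⊂ S', (⨅ J ∈ T, tangentAlgebra n J) ≠ ⨅ J ∈ S', tangentAlgebra n J)
    (h : (⨅ J ∈ S, tangentAlgebra n J) = ⨅ J ∈ S', tangentAlgebra n J) :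
    S = S' ∧
    ∀ J J' : Ideal (On n), J.IsPrime → J'.IsPrime →
      tangentAlgebra n J ≠ ⊤ → tangentAlgebra n J' ≠ ⊤ →
      tangentAlgebra n J = tangentAlgebra n J' → J = J' := by
  refine ⟨eq_of_biInf_tangentAlgebra_eq hS hS' hirr hirr' h,
    fun J J' hJ hJ' hJ_ne hJ'_ne hJJ' => ?_⟩
  have hsingle : ({J} : Finset _) = {J'} :=
    eq_of_biInf_tangentAlgebra_eq (by simpa using hJ) (by simpa using hJ')
      (isIrredundantFamily_singleton hJ_ne) (isIrredundantFamily_singleton hJ'_ne)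
      (by simpa using hJJ')
  exact Finset.singleton_injective hsingle

end
end

section
/- Every reduced analytic germ X ⊆ (ℂⁿ,0) different from ∅ and from (ℂⁿ,0) is recovered from its tangent algebra as its integral variety: X(D_X) = X. Equivalently, the ideal I(D_X) = {g ∈ O_n : g·D ∈ D_X for all D ∈ D} satisfies √I(D_X) = I_X; in particular I_X ⊆ I(D_X) and I(D_X) ⊆ I_X. -/
open Filter Topology

set_option synthInstance.maxHeartbeats 1000000
set_option maxHeartbeats 1000000

noncomputable section

/-!
If `g ∈ I(D_X)`, then `g • D` preserves `I_X` for every vector field `D`, and the Leibniz rule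
gives `g ^ k * D^[k] f ∈ I_X` for `f ∈ I_X`. When `g ∉ I_X`, radicality forbids `D^[k] f` from
being a unit, so it vanishes at `0`. For the directional derivative `D = ∂_v` these values are
the diagonal Taylor coefficients `d^k f(0)(v, …, v)`, hence `f = 0`. So `I(D_X) ⊆ I_X` unless
`I_X = 0`, and the reverse inclusion is immediate.
-/

section Analytic

variable {𝕜 E F : Type*} [NontriviallyNormedField 𝕜] [NormedAddCommGroup E] [NormedSpace 𝕜 E]
  [NormedAddCommGroup F] [NormedSpace 𝕜 F] [CompleteSpace F] {f : E → F} {x : E}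

theorem AnalyticAt.fderiv_iteratedFDeriv_apply_diag (hf : AnalyticAt 𝕜 f x) (k : ℕ) (v : E) :
    fderiv 𝕜 (fun z => iteratedFDeriv 𝕜 k f z fun _ => v) x v =
      iteratedFDeriv 𝕜 (k + 1) f x fun _ => v := by
  have hdiff : DifferentiableAt 𝕜 (iteratedFDeriv 𝕜 k f) x :=
    (AnalyticOnNhd.iteratedFDeriv (fun _ hz => hz : AnalyticOnNhd 𝕜 f {z | AnalyticAt 𝕜 f z}) k
      x hf).differentiableAt
  rw [fderiv_continuousMultilinear_apply_const_apply hdiff, iteratedFDeriv_succ_apply_left]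
  rfl

theorem AnalyticAt.eventuallyEq_zero_of_iteratedFDeriv_apply_diag [CharZero 𝕜]
    (hf : AnalyticAt 𝕜 f x) (h : ∀ (k : ℕ) (v : E), iteratedFDeriv 𝕜 k f x (fun _ => v) = 0) :
    f =ᶠ[𝓝 x] 0 := by
  obtain ⟨p, r, hp⟩ := hf
  filter_upwards [Metric.eball_mem_nhds x hp.r_pos] with z hz
  have hsum := hp.hasSum_iteratedFDeriv (y := z - x) (by simpa [edist_eq_enorm_sub] using hz)
  simp only [h, smul_zero, add_sub_cancel] at hsum
  exact hsum.unique hasSum_zero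

end Analytic

section Derivation

variable {A R : Type*} [CommSemiring A] [CommRing R] [Algebra A R] {J : Ideal R} {g : R}

theorem Derivation.pow_succ_mul_apply_mem (D : Derivation A R R) (hg : ∀ f ∈ J, g * D f ∈ J)
    {k : ℕ} {u : R} (hu : g ^ k * u ∈ J) : g ^ (k + 1) * D u ∈ J := by
  cases k with
  | zero => simpa using hg u (by simpa using hu)
  | succ m =>
    have key : g ^ (m + 1 + 1) * D u =
        g * D (g ^ (m + 1) * u) - (m + 1) • (D g * (g ^ (m + 1) * u)) := by
      rw [Derivation.leibniz, Derivation.leibniz_pow]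
      simp only [smul_eq_mul, nsmul_eq_mul]
      push_cast
      ring
    rw [key]
    exact J.sub_mem (hg _ hu) (nsmul_mem (J.mul_mem_left _ hu) _)

theorem Derivation.pow_mul_iterate_mem (D : Derivation A R R) (hg : ∀ f ∈ J, g * D f ∈ J)
    {u : R} (hu : u ∈ J) (k : ℕ) : g ^ k * D^[k] u ∈ J := by
  induction k with
  | zero => simpa using hu
  | succ k ih => rw [Function.iterate_succ_apply']; exact D.pow_succ_mul_apply_mem hg ih

end Derivation

section Germs

variable {n : ℕ}

theorem isUnit_of_germValue_ne_zero {f : On n} (hf : germValue f.1 ≠ 0) : IsUnit f := by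
  obtain ⟨F, hF, hfF⟩ := mem_On.mp f.2
  have hF0 : F 0 ≠ 0 := by rwa [hfF] at hf
  let finv : On n := ⟨Germ.ofFun fun z => (F z)⁻¹, mem_On.mpr ⟨_, hF.inv hF0, rfl⟩⟩
  refine IsUnit.of_mul_eq_one finv (Subtype.ext ?_)
  rw [MulMemClass.coe_mul, OneMemClass.coe_one, hfF, ← Germ.coe_mul, ← Germ.coe_one]
  refine Germ.coe_eq.mpr ?_
  filter_upwards [hF.continuousAt.eventually_ne hF0] with z hz
  exact mul_inv_cancel₀ hz

theorem germValue_eq_zero_of_pow_mul_mem {J : Ideal (On n)} (hJ : J.IsRadical) {g h : On n}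
    (hg : g ∉ J) {k : ℕ} (hk : g ^ k * h ∈ J) : germValue h.1 = 0 := by
  by_contra h0
  obtain ⟨u, rfl⟩ := isUnit_of_germValue_ne_zero h0
  exact hg (hJ ⟨k, by simpa using J.mul_mem_right (↑u⁻¹ : On n) hk⟩)

def lineDerivOn (v : Fin n → ℂ) (f : On n) : On n :=
  ⟨f.1.map' (fun F z => fderiv ℂ F z v) fun _ _ h => h.fderiv.fun_comp (· v), by
    obtain ⟨F, hF, hfF⟩ := mem_On.mp f.2
    rw [hfF]
    exact mem_On.mpr ⟨_, (ContinuousLinearMap.apply ℂ ℂ v).analyticAt _ |>.comp hF.fderiv, rfl⟩⟩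

theorem lineDerivOn_coe (v : Fin n → ℂ) {f : On n} {F : (Fin n → ℂ) → ℂ}
    (hfF : f.1 = Germ.ofFun F) :
    (lineDerivOn v f).1 = Germ.ofFun fun z => fderiv ℂ F z v := by
  rw [← Germ.map'_coe (fun F z => fderiv ℂ F z v) fun _ _ h => h.fderiv.fun_comp (· v), ← hfF]
  rfl

def lineDerivation (v : Fin n → ℂ) : Dn n where
  toFun := lineDerivOn v
  map_add' f g := by
    obtain ⟨F, hF, hfF⟩ := mem_On.mp f.2
    obtain ⟨G, hG, hgG⟩ := mem_On.mp g.2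
    have hfg : (f + g).1 = Germ.ofFun (F + G) := by rw [AddMemClass.coe_add, hfF, hgG, Germ.coe_add]
    refine Subtype.ext ?_
    rw [AddMemClass.coe_add, lineDerivOn_coe v hfg, lineDerivOn_coe v hfF, lineDerivOn_coe v hgG,
      ← Germ.coe_add]
    refine Germ.coe_eq.mpr ?_
    filter_upwards [hF.eventually_analyticAt, hG.eventually_analyticAt] with z hFz hGz
    simp [fderiv_add hFz.differentiableAt hGz.differentiableAt]
  map_smul' c f := by
    obtain ⟨F, hF, hfF⟩ := mem_On.mp f.2
    have hcf : (c • f).1 = Germ.ofFun (c • F) := by rw [Subalgebra.coe_smul, hfF, Germ.coe_smul]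
    refine Subtype.ext ?_
    rw [RingHom.id_apply, Subalgebra.coe_smul, lineDerivOn_coe v hcf, lineDerivOn_coe v hfF,
      ← Germ.coe_smul]
    refine Germ.coe_eq.mpr ?_
    filter_upwards [hF.eventually_analyticAt] with z hFz
    simp [fderiv_const_smul hFz.differentiableAt]
  map_one_eq_zero' := by
    refine Subtype.ext ?_
    show (lineDerivOn v 1).1 = _
    rw [lineDerivOn_coe v (rfl : (1 : On n).1 = Germ.ofFun fun _ => 1)]
    simp only [fderiv_fun_const, Pi.zero_apply, zero_apply, ZeroMemClass.coe_zero]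
    exact Germ.coe_zero
  leibniz' a b := by
    obtain ⟨F, hF, haF⟩ := mem_On.mp a.2
    obtain ⟨G, hG, hbG⟩ := mem_On.mp b.2
    have hab : (a * b).1 = Germ.ofFun (F * G) := by rw [MulMemClass.coe_mul, haF, hbG, Germ.coe_mul]
    refine Subtype.ext ?_
    show (lineDerivOn v (a * b)).1 = a.1 * (lineDerivOn v b).1 + b.1 * (lineDerivOn v a).1
    rw [lineDerivOn_coe v hab, lineDerivOn_coe v haF, lineDerivOn_coe v hbG, haF, hbG]
    rw [← Germ.coe_mul, ← Germ.coe_mul, ← Germ.coe_add]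
    refine Germ.coe_eq.mpr ?_
    filter_upwards [hF.eventually_analyticAt, hG.eventually_analyticAt] with z hFz hGz
    simp [fderiv_mul hFz.differentiableAt hGz.differentiableAt]

theorem lineDerivation_coe (v : Fin n → ℂ) {f : On n} {F : (Fin n → ℂ) → ℂ}
    (hfF : f.1 = Germ.ofFun F) :
    (lineDerivation v f).1 = Germ.ofFun fun z => fderiv ℂ F z v :=
  lineDerivOn_coe v hfF

theorem lineDerivation_iterate_coe (v : Fin n → ℂ) {f : On n} {F : (Fin n → ℂ) → ℂ}
    (hF : AnalyticAt ℂ F 0) (hfF : f.1 = Germ.ofFun F) (k : ℕ) :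
    ((lineDerivation v)^[k] f).1 = Germ.ofFun fun z => iteratedFDeriv ℂ k F z fun _ => v := by
  induction k with
  | zero => simpa using hfF
  | succ k ih =>
    rw [Function.iterate_succ_apply', lineDerivation_coe v ih]
    refine Germ.coe_eq.mpr ?_
    filter_upwards [hF.eventually_analyticAt] with z hz
    exact hz.fderiv_iteratedFDeriv_apply_diag k v

theorem eq_zero_of_germValue_iterate_lineDerivation {f : On n}
    (h : ∀ (k : ℕ) (v : Fin n → ℂ), germValue ((lineDerivation v)^[k] f).1 = 0) : f = 0 := by
  obtain ⟨F, hF, hfF⟩ := mem_On.mp f.2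
  refine Subtype.ext (hfF.trans (Germ.coe_eq.mpr (hF.eventuallyEq_zero_of_iteratedFDeriv_apply_diag
    fun k v => ?_)))
  have hkv := h k v
  rwa [lineDerivation_iterate_coe v hF hfF k] at hkv

end Germs

section IntegralVariety

variable {n : ℕ}

theorem le_intIdeal_tangentAlgebra (J : Ideal (On n)) : J ≤ intIdeal (tangentAlgebra n J) :=
  fun _ hg _ _ _ => J.mul_mem_right _ hg

theorem intIdeal_tangentAlgebra_le {J : Ideal (On n)} (hJ : J.IsRadical) (hJ0 : J ≠ ⊥) :
    intIdeal (tangentAlgebra n J) ≤ J := by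
  intro g hg
  by_contra hgJ
  refine hJ0 (eq_bot_iff.mpr fun f hf => Ideal.mem_bot.mpr ?_)
  refine eq_zero_of_germValue_iterate_lineDerivation fun k v => ?_
  exact germValue_eq_zero_of_pow_mul_mem hJ hgJ
    ((lineDerivation v).pow_mul_iterate_mem (fun u hu => hg (lineDerivation v) u hu) hf k)

end IntegralVariety

theorem integral_variety_of_tangentAlgebra_general (n : ℕ) (J : Ideal (On n)) (hJ : J.IsRadical)
    (h2 : J ≠ ⊥) :
    (intIdeal (tangentAlgebra n J)).radical = J ∧
    J ≤ intIdeal (tangentAlgebra n J) ∧ intIdeal (tangentAlgebra n J) ≤ J := by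
  have hI : intIdeal (tangentAlgebra n J) = J :=
    (intIdeal_tangentAlgebra_le hJ h2).antisymm (le_intIdeal_tangentAlgebra J)
  exact ⟨by rw [hI, hJ.radical], hI.ge, hI.le⟩

/-- Every reduced analytic germ `X ≠ ∅, (ℂⁿ,0)` is recovered from its tangent algebra as its
integral variety: `X(D_X) = X`, i.e. `√I(D_X) = I_X`; in particular `I_X ⊆ I(D_X)` and
`I(D_X) ⊆ I_X`. -/
theorem integral_variety_of_tangentAlgebra (n : ℕ) (J : Ideal (On n)) (hJ : J.IsRadical)
    (h1 : J ≠ ⊤) (h2 : J ≠ ⊥) :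
    (intIdeal (tangentAlgebra n J)).radical = J ∧
    J ≤ intIdeal (tangentAlgebra n J) ∧ intIdeal (tangentAlgebra n J) ≤ J :=
  integral_variety_of_tangentAlgebra_general n J hJ h2

end
end

section
/- Let A be a balanced Lie subalgebra of D = Der_ℂ(O_n). Then the integral variety X(A) is different from ∅ and from (ℂⁿ,0); equivalently, the ideal I(A) = {g ∈ O_n : g·D ∈ A for all D ∈ D} satisfies I(A) ≠ 0 and I(A) ≠ O_n. -/
open Filter Topology

set_option synthInstance.maxHeartbeats 1000000
set_option maxHeartbeats 1000000

noncomputable section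

/-! Let `a ∈ A` be as in the definition of balanced. The identity
`(g·a²f)·E + (g·E(af))·a = [a, (af·g)·E] − [[a, f·a], g·E]` puts the left side in `A`.
Taking `E = a` gives `(g·a²f)·a ∈ A`; substituting `g ↦ a²f` and subtracting then gives
`(a²f)²·E ∈ A` for every `E`, i.e. `(a²f)² ∈ I(A)`. If `I(A) = 0`, reducedness of `O_n` forces
`a²f = 0` for all `f`, and then `2(af)² = a²(f²) = 0` forces `a = 0`. If `I(A) = O_n`, then
`A = D` is itself a nonzero Lie ideal of `D` contained in `A`. -/

instance Filter.Germ.isReduced {α R : Type*} [MonoidWithZero R] [IsReduced R] (l : Filter α) :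
    IsReduced (Filter.Germ l R) where
  eq_zero g := by
    induction g using Filter.Germ.inductionOn with
    | _ f =>
      rintro ⟨k, hk⟩
      rw [← Filter.Germ.coe_pow] at hk
      exact Filter.Germ.coe_eq.mpr <|
        (Filter.Germ.coe_eq.mp hk).mono fun x hx => IsReduced.eq_zero _ ⟨k, hx⟩

instance On.isReduced (n : ℕ) : IsReduced (On n) :=
  isReduced_of_injective (On n).val Subtype.val_injective

namespace Derivation

variable {K R : Type*} [Field K] [CommRing R] [Algebra K R]

theorem lie_smul_self (a : Derivation K R R) (f : R) : ⁅a, f • a⁆ = a f • a := by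
  ext x
  simp only [commutator_apply, smul_apply, smul_eq_mul, leibniz]
  ring

theorem smul_add_smul_eq_lie_sub_lie (a E : Derivation K R R) (f g : R) :
    (g * a (a f)) • E + (g * E (a f)) • a = ⁅a, (a f * g) • E⁆ - ⁅⁅a, f • a⁆, g • E⁆ := by
  rw [lie_smul_self]
  ext x
  simp only [add_apply, sub_apply, smul_apply, commutator_apply, smul_eq_mul, leibniz]
  ring

theorem eq_zero_of_forall_apply_apply_eq_zero [NeZero (2 : K)] [IsReduced R]
    (a : Derivation K R R) (h : ∀ f, a (a f) = 0) : a = 0 := by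
  ext f
  have h_sq : (2 : K) • (a f * a f) = 0 := by
    have := h (f * f)
    simp only [leibniz, map_add, smul_eq_mul, h f] at this
    rw [two_smul]
    linear_combination this
  exact IsReduced.eq_zero _ ⟨2, by rw [sq]; exact (smul_eq_zero.mp h_sq).resolve_left two_ne_zero⟩

end Derivation

namespace LieSubalgebra

variable {K R : Type*} [Field K] [CommRing R] [Algebra K R]
  {A : LieSubalgebra K (Derivation K R R)} {a : Derivation K R R}

theorem smul_add_smul_mem (ha₁ : ∀ b : Derivation K R R, ⁅a, b⁆ ∈ A)
    (ha₂ : ∀ b c : Derivation K R R, ⁅⁅a, b⁆, c⁆ ∈ A)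
    (E : Derivation K R R) (f g : R) : (g * a (a f)) • E + (g * E (a f)) • a ∈ A := by
  rw [Derivation.smul_add_smul_eq_lie_sub_lie]
  exact sub_mem (ha₁ _) (ha₂ _ _)

theorem smul_self_mem [NeZero (2 : K)] (ha₁ : ∀ b : Derivation K R R, ⁅a, b⁆ ∈ A)
    (ha₂ : ∀ b c : Derivation K R R, ⁅⁅a, b⁆, c⁆ ∈ A) (f g : R) : (g * a (a f)) • a ∈ A := by
  have h := A.smul_mem (2 : K)⁻¹ (smul_add_smul_mem ha₁ ha₂ a f g)
  rwa [← two_smul K, smul_smul, inv_mul_cancel₀ two_ne_zero, one_smul] at h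

theorem sq_smul_mem [NeZero (2 : K)] (ha₁ : ∀ b : Derivation K R R, ⁅a, b⁆ ∈ A)
    (ha₂ : ∀ b c : Derivation K R R, ⁅⁅a, b⁆, c⁆ ∈ A) (E : Derivation K R R) (f : R) :
    a (a f) ^ 2 • E ∈ A := by
  have h := sub_mem (smul_add_smul_mem ha₁ ha₂ E f (a (a f)))
    (smul_self_mem ha₁ ha₂ f (E (a f)))
  have hcoeff : a (a f) * E (a f) - E (a f) * a (a f) = 0 := sub_eq_zero.mpr (mul_comm _ _)
  rwa [add_sub_assoc, ← sub_smul, hcoeff, zero_smul, add_zero, ← sq] at h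

end LieSubalgebra

theorem IsBalancedIn.ne {L : Type*} [LieRing L] [LieAlgebra ℂ L] {A B : LieSubalgebra ℂ L}
    (h : IsBalancedIn A B) : A ≠ B := by
  rintro rfl
  obtain ⟨-, hideal, a, haA, ha0, -⟩ := h
  have hmem : (⟨a, haA⟩ : A) ∈ (⊤ : LieIdeal ℂ A) := trivial
  rw [hideal ⊤ fun x _ => x.2, LieSubmodule.mem_bot] at hmem
  exact ha0 (congrArg Subtype.val hmem)

theorem eq_top_of_intIdeal_eq_top {n : ℕ} {A : LieSubalgebra ℂ (Dn n)} (h : intIdeal A = ⊤) :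
    A = ⊤ :=
  eq_top_iff.mpr fun D _ => by simpa using (h ▸ Submodule.mem_top : (1 : On n) ∈ intIdeal A) D

/-- If `A` is a balanced Lie subalgebra of `D` then its integral variety `X(A)` is different
from `∅` and from `(ℂⁿ,0)`; equivalently `I(A) ≠ 0` and `I(A) ≠ O_n`. -/
theorem intIdeal_ne_bot_ne_top_of_balanced (n : ℕ) (A : LieSubalgebra ℂ (Dn n))
    (hA : IsBalancedIn A (⊤ : LieSubalgebra ℂ (Dn n))) :
    intIdeal A ≠ ⊥ ∧ intIdeal A ≠ ⊤ := by
  refine ⟨fun hbot => ?_, fun htop => hA.ne (eq_top_of_intIdeal_eq_top htop)⟩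
  obtain ⟨-, -, a, -, ha0, ha₁, ha₂⟩ := hA
  have hsq : ∀ f, a (a f) ^ 2 ∈ intIdeal A := fun f D =>
    LieSubalgebra.sq_smul_mem (fun b => ha₁ b trivial) (fun b c => ha₂ b trivial c trivial) D f
  refine ha0 (Derivation.eq_zero_of_forall_apply_apply_eq_zero a fun f => ?_)
  have h := hsq f
  rw [hbot, Ideal.mem_bot] at h
  exact IsReduced.eq_zero _ ⟨2, h⟩

end
end

section
/- Let A be a balanced Lie subalgebra of D = Der_ℂ(O_n). Then A is contained in the tangent algebra of its integral variety: A ⊆ D_{X(A)}, i.e. every D ∈ A satisfies D(√I(A)) ⊆ √I(A). -/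
open Filter Topology

set_option synthInstance.maxHeartbeats 1000000
set_option maxHeartbeats 1000000

noncomputable section

/-! Each `D ∈ A` preserves `I(A)`, because `(D g) • E = ⁅D, g • E⁆ - g • ⁅D, E⁆`. In
characteristic zero a derivation preserving an ideal also preserves its radical: if `a ^ m ∈ I`,
repeatedly differentiating and multiplying by `D a` gives `a ^ j * (D a) ^ (2 * k + 1) ∈ I`
whenever `j + k + 1 = m`, and `j = 0` yields `(D a) ^ (2 * m - 1) ∈ I`. -/

theorem Ideal.mem_of_natCast_mul_mem (K : Type*) {R : Type*} [Field K] [CharZero K]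
    [CommRing R] [Algebra K R] {I : Ideal R} {k : ℕ} (hk : k ≠ 0) {c : R}
    (h : (k : R) * c ∈ I) : c ∈ I := by
  have hunit : IsUnit (k : R) := by
    simpa using (Nat.cast_ne_zero.mpr hk : (k : K) ≠ 0).isUnit.map (algebraMap K R)
  exact (I.unit_mul_mem_iff_mem hunit).mp h

namespace Derivation

section Radical

variable {K R : Type*} [Field K] [CharZero K] [CommRing R] [Algebra K R]
  {I : Ideal R} {D : Derivation K R R}

theorem pow_mul_apply_pow_mem (hD : ∀ x ∈ I, D x ∈ I) {a : R} :
    ∀ {j k : ℕ}, a ^ (j + k + 1) ∈ I → a ^ j * D a ^ (2 * k + 1) ∈ I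
  | j, 0, ha => by
    have hDa : D (a ^ (j + 1)) ∈ I := hD _ ha
    rw [leibniz_pow, Nat.add_sub_cancel, smul_eq_mul, nsmul_eq_mul] at hDa
    simpa using I.mem_of_natCast_mul_mem K (Nat.succ_ne_zero j) hDa
  | j, k + 1, ha => by
    have hb : a ^ (j + 1) * D a ^ (2 * k + 1) ∈ I :=
      pow_mul_apply_pow_mem hD (by rwa [show j + 1 + k + 1 = j + (k + 1) + 1 by omega])
    have hcomb : D a * D (a ^ (j + 1) * D a ^ (2 * k + 1))
        - ((2 * k + 1 : ℕ) : R) * (D (D a) * (a ^ (j + 1) * D a ^ (2 * k + 1))) ∈ I :=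
      I.sub_mem (I.mul_mem_left _ (hD _ hb)) (I.mul_mem_left _ (I.mul_mem_left _ hb))
    have heq : D a * D (a ^ (j + 1) * D a ^ (2 * k + 1))
        - ((2 * k + 1 : ℕ) : R) * (D (D a) * (a ^ (j + 1) * D a ^ (2 * k + 1))) =
        ((j + 1 : ℕ) : R) * (a ^ j * D a ^ (2 * (k + 1) + 1)) := by
      rw [leibniz, leibniz_pow, leibniz_pow, Nat.add_sub_cancel, Nat.add_sub_cancel]
      simp only [smul_eq_mul, nsmul_eq_mul]
      push_cast
      ring
    exact I.mem_of_natCast_mul_mem K (Nat.succ_ne_zero j) (heq ▸ hcomb)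

theorem apply_mem_radical (hD : ∀ x ∈ I, D x ∈ I) {a : R} (ha : a ∈ I.radical) :
    D a ∈ I.radical := by
  obtain ⟨m, hm⟩ := ha
  cases m with
  | zero =>
    rw [pow_zero, ← Ideal.eq_top_iff_one] at hm
    rw [hm, Ideal.radical_top]
    exact Submodule.mem_top
  | succ m =>
    exact ⟨2 * m + 1, by simpa using pow_mul_apply_pow_mem hD (j := 0) (k := m) (by simpa)⟩

end Radical

theorem lie_smul_eq_apply_smul_add {K R : Type*} [CommRing K] [CommRing R] [Algebra K R]
    (D E : Derivation K R R) (g : R) : ⁅D, g • E⁆ = D g • E + g • ⁅D, E⁆ := by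
  ext f
  simp only [commutator_apply, smul_apply, add_apply, smul_eq_mul, leibniz]
  ring

end Derivation

theorem apply_mem_intIdeal {n : ℕ} {A : LieSubalgebra ℂ (Dn n)} {D : Dn n} (hD : D ∈ A)
    {g : On n} (hg : g ∈ intIdeal A) : D g ∈ intIdeal A := fun E => by
  have hlie : ⁅D, g • E⁆ ∈ A := A.lie_mem hD (hg E)
  rwa [D.lie_smul_eq_apply_smul_add, add_mem_cancel_right (hg ⁅D, E⁆)] at hlie

theorem balanced_le_tangentAlgebra_of_integral_variety_general (n : ℕ)
    (A : LieSubalgebra ℂ (Dn n)) :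
    A ≤ tangentAlgebra n (intIdeal A).radical ∧
    ∀ D ∈ A, ∀ f ∈ (intIdeal A).radical, D f ∈ (intIdeal A).radical :=
  have hstable : ∀ D ∈ A, ∀ f ∈ (intIdeal A).radical, D f ∈ (intIdeal A).radical :=
    fun D hD _ hf => D.apply_mem_radical (fun _ hx => apply_mem_intIdeal hD hx) hf
  ⟨hstable, hstable⟩

/-- A balanced Lie subalgebra `A` of `D` is contained in the tangent algebra of its integral
variety: `A ⊆ D_{X(A)}`, i.e. every `D ∈ A` maps `√I(A)` into `√I(A)`. -/
theorem balanced_le_tangentAlgebra_of_integral_variety (n : ℕ)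
    (A : LieSubalgebra ℂ (Dn n))
    (hA : IsBalancedIn A (⊤ : LieSubalgebra ℂ (Dn n))) :
    A ≤ tangentAlgebra n (intIdeal A).radical ∧
    ∀ D ∈ A, ∀ f ∈ (intIdeal A).radical, D f ∈ (intIdeal A).radical :=
  balanced_le_tangentAlgebra_of_integral_variety_general n A

end
end
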